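/- arXiv:2105.12158 — 3 statements merged into one kernel-verified Lean document; each statement's English description precedes it below -/
import Mathlib

section
/- Lack of continuous dependence on the initial data: Let L > 0, ρ = μ = 1, let Φ₀ be the prototype adhesive potential, and let ε ∈ (0,1). Define u_ε(t,x) = εt + 1 + ε and v_ε(t,x) = (1−ε)·cos(√2·t). Then: (i) u_ε satisfies ∂²_t u_ε = −∂⁴ₓu_ε − Φ₀'(u_ε) pointwise for all t > 0 and 0 < x < L (note u_ε(t,x) > 1 so Φ₀'(u_ε) = 0), with initial data u_ε(0,x) = 1+ε, ∂_t u_ε(0,x) = ε; (ii) v_ε satisfies ∂²_t v_ε = −∂⁴ₓv_ε − Φ₀'(v_ε) pointwise for all t > 0 and 0 < x < L (note |v_ε(t,x)| ≤ 1−ε < 1 so Φ₀'(v_ε) = 2v_ε), with initial data v_ε(0,x) = 1−ε, ∂_t v_ε(0,x) = 0; both trivially satisfy the free-end boundary conditions; (iii) the distance of the initial data is ‖u_ε(0,·) − v_ε(0,·)‖_{L²(0,L)} + ‖∂_t u_ε(0,·) − ∂_t v_ε(0,·)‖_{L²(0,L)} = 3ε√L; and (iv) for every x ∈ [0,L], u_ε(t,x)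 → ∞ as t → ∞, while limsup_{t→∞} v_ε(t,x) = 1−ε. -/
/-!
Both functions are constant in `x`, so every spatial derivative vanishes and the beam
equation reduces to an ODE in `t`. Since `u_ε > 1`, the force `Φ₀'(u_ε)` is zero and `u_ε` is
free motion `u'' = 0`, which escapes linearly. Since `|v_ε| < 1`, the force is `2 v_ε` and `v_ε`
is a harmonic oscillator of frequency `√2`, whose limsup is its amplitude `1 - ε`.
-/

open MeasureTheory Filter Set intervalIntegral Real

/-- The prototype adhesive force `Φ₀'(s) = 2s` for `|s| < 1`, `Φ₀'(s) = 0` for `|s| > 1`. -/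
noncomputable def Phi0' (s : ℝ) : ℝ := if |s| < 1 then 2 * s else 0

lemma Phi0'_of_abs_lt_one {s : ℝ} (hs : |s| < 1) : Phi0' s = 2 * s := if_pos hs

lemma Phi0'_of_one_le_abs {s : ℝ} (hs : 1 ≤ |s|) : Phi0' s = 0 := if_neg hs.not_gt

lemma hasDerivAt_const_mul_cos_mul (a ω t : ℝ) :
    HasDerivAt (fun τ => a * cos (ω * τ)) (-(a * ω) * sin (ω * t)) t :=
  (((hasDerivAt_id' t).const_mul ω).cos.const_mul a).congr_deriv (by ring)

lemma hasDerivAt_const_mul_sin_mul (a ω t : ℝ) :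
    HasDerivAt (fun τ => a * sin (ω * τ)) (a * ω * cos (ω * t)) t :=
  (((hasDerivAt_id' t).const_mul ω).sin.const_mul a).congr_deriv (by ring)

lemma deriv_const_mul_cos_mul (a ω : ℝ) :
    deriv (fun τ => a * cos (ω * τ)) = fun t => -(a * ω) * sin (ω * t) :=
  funext fun t => (hasDerivAt_const_mul_cos_mul a ω t).deriv

lemma deriv_deriv_const_mul_cos_mul (a ω t : ℝ) :
    deriv (deriv fun τ => a * cos (ω * τ)) t = -ω ^ 2 * (a * cos (ω * t)) := by
  rw [deriv_const_mul_cos_mul, (hasDerivAt_const_mul_sin_mul (-(a * ω)) ω t).deriv]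
  ring

lemma abs_const_mul_cos_le {a : ℝ} (ha : 0 ≤ a) (x : ℝ) : |a * cos x| ≤ a := by
  rw [abs_mul, abs_of_nonneg ha]
  exact mul_le_of_le_one_right ha (abs_cos_le_one x)

lemma frequently_cos_mul_eq_one_atTop {ω : ℝ} (hω : 0 < ω) :
    ∃ᶠ t in atTop, cos (ω * t) = 1 := by
  rw [frequently_atTop]
  intro a
  obtain ⟨n, hn⟩ := exists_nat_ge (ω * a / (2 * π))
  refine ⟨n * (2 * π) / ω, ?_, ?_⟩
  · rw [le_div_iff₀ hω, mul_comm]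
    exact (div_le_iff₀ (by positivity)).1 hn
  · rw [mul_div_cancel₀ _ hω.ne', cos_nat_mul_two_pi]

lemma limsup_const_mul_cos_mul_atTop {a ω : ℝ} (ha : 0 ≤ a) (hω : 0 < ω) :
    limsup (fun t => a * cos (ω * t)) atTop = a := by
  have hle : ∀ t, a * cos (ω * t) ≤ a := fun t =>
    (le_abs_self _).trans (abs_const_mul_cos_le ha _)
  have hge : ∀ t, -a ≤ a * cos (ω * t) := fun t => neg_le_of_abs_le (abs_const_mul_cos_le ha _)
  apply le_antisymm
  · exact limsup_le_of_le (isCoboundedUnder_le_of_le atTop hge) (Eventually.of_forall hle)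
  · refine le_limsup_of_frequently_le ?_ (isBoundedUnder_of ⟨a, hle⟩)
    exact (frequently_cos_mul_eq_one_atTop hω).mono fun t ht => by rw [ht, mul_one]

lemma sqrt_integral_const_sq {L : ℝ} (hL : 0 ≤ L) (c : ℝ) :
    √(∫ _ in (0:ℝ)..L, c ^ 2) = |c| * √L := by
  rw [intervalIntegral.integral_const, sub_zero, smul_eq_mul, sqrt_mul hL, sqrt_sq_eq_abs, mul_comm]

/-- **Lack of continuous dependence on the initial data.**  With `ρ = μ = 1` and the
prototype adhesive potential, the explicit solutions `u_ε(t,x) = εt + 1 + ε` (detached) and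
`v_ε(t,x) = (1-ε) cos(√2 t)` (attached) of the adhesive beam equation have initial data at
`L²`-distance `3ε√L`, yet `u_ε → ∞` while `limsup_{t→∞} v_ε = 1 - ε`. -/
theorem lack_of_continuous_dependence
    (L ε : ℝ) (hL : 0 < L) (hε : ε ∈ Ioo (0:ℝ) 1)
    (uε vε : ℝ → ℝ → ℝ)
    (huε : ∀ t x, uε t x = ε * t + 1 + ε)
    (hvε : ∀ t x, vε t x = (1 - ε) * Real.cos (Real.sqrt 2 * t)) :
    -- (i) u_ε solves the adhesive beam equation, with data (1+ε, ε)
    (∀ t ∈ Ioi (0:ℝ), ∀ x ∈ Ioo 0 L,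
      1 < uε t x ∧
      deriv (deriv (fun τ => uε τ x)) t
        = -(iteratedDeriv 4 (fun y => uε t y) x) - Phi0' (uε t x)) ∧
    (∀ x ∈ Icc 0 L, uε 0 x = 1 + ε ∧ deriv (fun τ => uε τ x) 0 = ε) ∧
    -- (ii) v_ε solves the adhesive beam equation, with data (1-ε, 0)
    (∀ t ∈ Ioi (0:ℝ), ∀ x ∈ Ioo 0 L,
      |vε t x| ≤ 1 - ε ∧
      deriv (deriv (fun τ => vε τ x)) t
        = -(iteratedDeriv 4 (fun y => vε t y) x) - Phi0' (vε t x)) ∧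
    (∀ x ∈ Icc 0 L, vε 0 x = 1 - ε ∧ deriv (fun τ => vε τ x) 0 = 0) ∧
    -- both trivially satisfy the free-end boundary conditions
    (∀ t ∈ Ioi (0:ℝ),
      iteratedDeriv 2 (fun y => uε t y) 0 = 0 ∧ iteratedDeriv 2 (fun y => uε t y) L = 0 ∧
      iteratedDeriv 3 (fun y => uε t y) 0 = 0 ∧ iteratedDeriv 3 (fun y => uε t y) L = 0 ∧
      iteratedDeriv 2 (fun y => vε t y) 0 = 0 ∧ iteratedDeriv 2 (fun y => vε t y) L = 0 ∧
      iteratedDeriv 3 (fun y => vε t y) 0 = 0 ∧ iteratedDeriv 3 (fun y => vε t y) L = 0) ∧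
    -- (iii) L² distance of the initial data
    (Real.sqrt (∫ x in (0:ℝ)..L, (uε 0 x - vε 0 x) ^ 2)
      + Real.sqrt (∫ x in (0:ℝ)..L,
          (deriv (fun τ => uε τ x) 0 - deriv (fun τ => vε τ x) 0) ^ 2)
      = 3 * ε * Real.sqrt L) ∧
    -- (iv) completely different long-time behavior
    (∀ x ∈ Icc 0 L,
      Tendsto (fun t => uε t x) atTop atTop ∧
      Filter.limsup (fun t => vε t x) atTop = 1 - ε) := by
  obtain ⟨hε0, hε1⟩ := hε
  obtain rfl : uε = fun t _ => ε * t + 1 + ε := funext₂ huε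
  obtain rfl : vε = fun t _ => (1 - ε) * cos (√2 * t) := funext₂ hvε
  have hu_deriv : deriv (fun τ => ε * τ + 1 + ε) = fun _ => ε := funext fun t => by simp
  have hv_abs : ∀ t, |(1 - ε) * cos (√2 * t)| ≤ 1 - ε := fun t =>
    abs_const_mul_cos_le (by linarith) _
  refine ⟨fun t ht x _ => ?_, fun x _ => ?_, fun t _ x _ => ?_, fun x _ => ?_, fun t _ => ?_, ?_,
    fun x _ => ?_⟩
  · have hu_gt : 1 < ε * t + 1 + ε := by linarith [mul_pos hε0 (mem_Ioi.1 ht)]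
    refine ⟨hu_gt, ?_⟩
    rw [Phi0'_of_one_le_abs (hu_gt.le.trans (le_abs_self _)), hu_deriv]
    simp [iteratedDeriv_const]
  · simp [hu_deriv]
  · refine ⟨hv_abs t, ?_⟩
    rw [Phi0'_of_abs_lt_one ((hv_abs t).trans_lt (by linarith)), deriv_deriv_const_mul_cos_mul]
    simp [iteratedDeriv_const]
  · exact ⟨by simp, by rw [deriv_const_mul_cos_mul]; simp⟩
  · simp [iteratedDeriv_const]
  · simp only [hu_deriv, deriv_const_mul_cos_mul, mul_zero, cos_zero, sin_zero]
    rw [sqrt_integral_const_sq hL.le, sqrt_integral_const_sq hL.le,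
      abs_of_nonneg (by linarith), abs_of_nonneg (by linarith)]
    ring
  · exact ⟨tendsto_atTop_add_const_right _ _ (tendsto_atTop_add_const_right _ _
      (tendsto_id.const_mul_atTop hε0)),
      limsup_const_mul_cos_mul_atTop (by linarith) (by positivity)⟩
end

section
/- Loss of smoothness at the attachment–detachment transition: Let L > 0 and set t* = π/(4√2). Define u : [0,∞)×[0,L] → ℝ by u(t,x) = √2·sin(√2·t) for 0 ≤ t ≤ t* and u(t,x) = √2·t + 1 − π/4 for t ≥ t*. Then for every x ∈ [0,L] the map t ↦ u(t,x) is continuously differentiable on [0,∞) with u(t*,x) = 1 and ∂_t u(t*,x) = √2, but it is not twice differentiable at t = t*: the one-sided limits of the second time derivative satisfy lim_{t→t*⁻} ∂²_t u(t,x) = −2 and lim_{t→t*⁺} ∂²_t u(t,x) = 0. In particular u ∈ C¹([0,∞)×[0,L]) but u ∉ C²([0,∞)×[0,L]). -/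
open Filter Set Real Topology

/-!
Below `t* = π/(4√2)` the beam follows `g t = √2 sin(√2 t)`, above it the line
`h t = √2 t + 1 - π/4`. Since `√2 t* = π/4`, the two pieces agree to first order at `t*`
(value `1`, slope `√2`), so gluing them is `C¹` with derivative `2 cos(√2 t)` glued to the
constant `√2`. The second derivatives `-2√2 sin(√2 t)` and `0` already differ at `t*`
(`-2` against `0`), so the glued derivative has different one-sided derivatives there.
-/

section GluedAtPoint

variable {g h : ℝ → ℝ} {a g' h' : ℝ}

lemma hasDerivWithinAt_ite_le_Iic (hg : HasDerivAt g g' a) :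
    HasDerivWithinAt (fun t => if t ≤ a then g t else h t) g' (Iic a) a :=
  hg.hasDerivWithinAt.congr (fun _ ht => if_pos ht) (if_pos le_rfl)

lemma hasDerivWithinAt_ite_le_Ici (hga : g a = h a) (hh : HasDerivAt h h' a) :
    HasDerivWithinAt (fun t => if t ≤ a then g t else h t) h' (Ici a) a := by
  have hself : (if a ≤ a then g a else h a) = h a := by rw [if_pos le_rfl, hga]
  refine hh.hasDerivWithinAt.congr (fun t ht => ?_) hself
  rcases (mem_Ici.1 ht).eq_or_lt with rfl | hlt
  · exact hself
  · exact if_neg hlt.not_ge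

lemma hasDerivAt_ite_le_of_lt {t : ℝ} (ht : t < a) (hg : HasDerivAt g g' t) :
    HasDerivAt (fun t => if t ≤ a then g t else h t) g' t :=
  hg.congr_of_eventuallyEq <| eventually_of_mem (Iio_mem_nhds ht) fun _ hs => if_pos hs.le

lemma hasDerivAt_ite_le_of_gt {t : ℝ} (ht : a < t) (hh : HasDerivAt h h' t) :
    HasDerivAt (fun t => if t ≤ a then g t else h t) h' t :=
  hh.congr_of_eventuallyEq <| eventually_of_mem (Ioi_mem_nhds ht) fun _ hs => if_neg hs.not_ge

lemma hasDerivAt_ite_le {G H : ℝ → ℝ} (hg : ∀ t, HasDerivAt g (G t) t)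
    (hh : ∀ t, HasDerivAt h (H t) t) (hga : g a = h a) (hGa : G a = H a) (t : ℝ) :
    HasDerivAt (fun t => if t ≤ a then g t else h t) (if t ≤ a then G t else H t) t := by
  rcases lt_trichotomy t a with hlt | rfl | hgt
  · rw [if_pos hlt.le]; exact hasDerivAt_ite_le_of_lt hlt (hg t)
  · rw [if_pos le_rfl]
    have hglued := (hasDerivWithinAt_ite_le_Iic (h := h) (hg t)).union
      (hasDerivWithinAt_ite_le_Ici hga (hGa ▸ hh t))
    rwa [Iic_union_Ici, hasDerivWithinAt_univ] at hglued
  · rw [if_neg hgt.not_ge]; exact hasDerivAt_ite_le_of_gt hgt (hh t)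

lemma not_differentiableAt_ite_le (hga : g a = h a) (hg : HasDerivAt g g' a)
    (hh : HasDerivAt h h' a) (hne : g' ≠ h') :
    ¬ DifferentiableAt ℝ (fun t => if t ≤ a then g t else h t) a := by
  intro hdiff
  have hleft := (uniqueDiffOn_Iic a a self_mem_Iic).eq_deriv _ (hasDerivWithinAt_ite_le_Iic hg)
    hdiff.hasDerivAt.hasDerivWithinAt
  have hright := (uniqueDiffOn_Ici a a self_mem_Ici).eq_deriv _ (hasDerivWithinAt_ite_le_Ici hga hh)
    hdiff.hasDerivAt.hasDerivWithinAt
  exact hne (hleft.trans hright.symm)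

lemma deriv_ite_le_eventuallyEq_left :
    deriv (fun t => if t ≤ a then g t else h t) =ᶠ[𝓝[<] a] deriv g := by
  filter_upwards [self_mem_nhdsWithin] with t (ht : t < a)
  exact EventuallyEq.deriv_eq <| eventually_of_mem (Iio_mem_nhds ht) fun _ hs => if_pos hs.le

lemma deriv_ite_le_eventuallyEq_right :
    deriv (fun t => if t ≤ a then g t else h t) =ᶠ[𝓝[>] a] deriv h := by
  filter_upwards [self_mem_nhdsWithin] with t (ht : a < t)
  exact EventuallyEq.deriv_eq <| eventually_of_mem (Ioi_mem_nhds ht) fun _ hs => if_neg hs.not_ge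

end GluedAtPoint

noncomputable def detachTime : ℝ := π / (4 * √2)

noncomputable def attachedProfile (t : ℝ) : ℝ := √2 * sin (√2 * t)

noncomputable def detachedProfile (t : ℝ) : ℝ := √2 * t + 1 - π / 4

noncomputable def beamProfile (t : ℝ) : ℝ :=
  if t ≤ detachTime then attachedProfile t else detachedProfile t

noncomputable def beamVelocity (t : ℝ) : ℝ :=
  if t ≤ detachTime then 2 * cos (√2 * t) else √2

lemma sqrt_two_mul_detachTime : √2 * detachTime = π / 4 := by
  have : √2 ≠ 0 := by positivity
  rw [detachTime]; field_simp

lemma detachTime_pos : 0 < detachTime := by unfold detachTime; positivity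

lemma attachedProfile_detachTime : attachedProfile detachTime = 1 := by
  rw [attachedProfile, sqrt_two_mul_detachTime, sin_pi_div_four]
  field_simp; norm_num

lemma detachedProfile_detachTime : detachedProfile detachTime = 1 := by
  rw [detachedProfile, sqrt_two_mul_detachTime]; ring

lemma hasDerivAt_sqrt_two_mul (t : ℝ) : HasDerivAt (fun t => √2 * t) √2 t := by
  simpa using (hasDerivAt_id t).const_mul √2

lemma hasDerivAt_attachedProfile (t : ℝ) :
    HasDerivAt attachedProfile (2 * cos (√2 * t)) t := by
  refine (((hasDerivAt_sin _).comp t (hasDerivAt_sqrt_two_mul t)).const_mul √2).congr_deriv ?_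
  rw [mul_comm (cos _), ← mul_assoc, mul_self_sqrt zero_le_two]

lemma hasDerivAt_detachedProfile (t : ℝ) : HasDerivAt detachedProfile √2 t :=
  ((hasDerivAt_sqrt_two_mul t).add_const 1).sub_const (π / 4)

lemma hasDerivAt_two_mul_cos_sqrt_two_mul (t : ℝ) :
    HasDerivAt (fun t => 2 * cos (√2 * t)) (-2 * √2 * sin (√2 * t)) t := by
  refine (((hasDerivAt_cos _).comp t (hasDerivAt_sqrt_two_mul t)).const_mul 2).congr_deriv ?_
  ring

lemma two_mul_cos_sqrt_two_mul_detachTime : 2 * cos (√2 * detachTime) = √2 := by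
  rw [sqrt_two_mul_detachTime, cos_pi_div_four]; ring

lemma neg_two_mul_sqrt_two_mul_sin_detachTime : -2 * √2 * sin (√2 * detachTime) = -2 := by
  rw [sqrt_two_mul_detachTime, sin_pi_div_four, mul_assoc, mul_div_assoc',
    mul_self_sqrt zero_le_two]
  ring

lemma beamProfile_detachTime : beamProfile detachTime = 1 :=
  (if_pos le_rfl).trans attachedProfile_detachTime

lemma beamVelocity_detachTime : beamVelocity detachTime = √2 :=
  (if_pos le_rfl).trans two_mul_cos_sqrt_two_mul_detachTime

lemma hasDerivAt_beamProfile (t : ℝ) : HasDerivAt beamProfile (beamVelocity t) t :=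
  hasDerivAt_ite_le hasDerivAt_attachedProfile hasDerivAt_detachedProfile
    (attachedProfile_detachTime.trans detachedProfile_detachTime.symm)
    two_mul_cos_sqrt_two_mul_detachTime t

lemma deriv_beamProfile : deriv beamProfile = beamVelocity :=
  funext fun t => (hasDerivAt_beamProfile t).deriv

lemma continuous_beamVelocity : Continuous beamVelocity :=
  Continuous.if_le (by fun_prop) continuous_const continuous_id continuous_const
    fun _ ht => ht ▸ two_mul_cos_sqrt_two_mul_detachTime

lemma contDiff_one_beamProfile : ContDiff ℝ 1 beamProfile :=
  contDiff_one_iff_deriv.2 ⟨fun t => (hasDerivAt_beamProfile t).differentiableAt,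
    deriv_beamProfile ▸ continuous_beamVelocity⟩

lemma not_differentiableAt_beamVelocity : ¬ DifferentiableAt ℝ beamVelocity detachTime :=
  not_differentiableAt_ite_le two_mul_cos_sqrt_two_mul_detachTime
    (hasDerivAt_two_mul_cos_sqrt_two_mul detachTime) (hasDerivAt_const _ _)
    (by rw [neg_two_mul_sqrt_two_mul_sin_detachTime]; norm_num)

lemma tendsto_deriv_beamVelocity_left :
    Tendsto (deriv beamVelocity) (𝓝[<] detachTime) (𝓝 (-2)) := by
  refine Tendsto.congr' (deriv_ite_le_eventuallyEq_left).symm ?_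
  rw [funext fun t => (hasDerivAt_two_mul_cos_sqrt_two_mul t).deriv]
  have hcont : Continuous fun t => -2 * √2 * sin (√2 * t) := by fun_prop
  simpa only [neg_two_mul_sqrt_two_mul_sin_detachTime] using
    (hcont.tendsto detachTime).mono_left nhdsWithin_le_nhds

lemma tendsto_deriv_beamVelocity_right :
    Tendsto (deriv beamVelocity) (𝓝[>] detachTime) (𝓝 0) := by
  refine Tendsto.congr' (deriv_ite_le_eventuallyEq_right).symm ?_
  simp only [deriv_const']
  exact tendsto_const_nhds

lemma not_contDiffAt_two_beamProfile : ¬ ContDiffAt ℝ 2 beamProfile detachTime := fun h =>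
  not_differentiableAt_beamVelocity <|
    deriv_beamProfile ▸ (h.derivWithin (m := 1) (by norm_num)).differentiableAt one_ne_zero

lemma ContDiffOn.contDiffAt_of_comp_fst {E F G : Type*} [NormedAddCommGroup E]
    [NormedSpace ℝ E] [NormedAddCommGroup F] [NormedSpace ℝ F] [NormedAddCommGroup G]
    [NormedSpace ℝ G] {n : WithTop ℕ∞} {f : E → G} {s : Set E} {t : Set F} {a : E} {b : F}
    (hf : ContDiffOn ℝ n (fun p : E × F => f p.1) (s ×ˢ t)) (hs : s ∈ 𝓝 a)
    (ht : t ∈ 𝓝 b) :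
    ContDiffAt ℝ n f a :=
  (hf.contDiffAt (prod_mem_nhds hs ht)).comp (f := fun x => (x, b)) a
    (contDiffAt_id.prodMk contDiffAt_const)

/-- **Loss of smoothness at the attachment–detachment transition.**
With `t* = π/(4√2)`, the function `u(t,x) = √2 sin(√2 t)` for `t ≤ t*` and
`u(t,x) = √2 t + 1 - π/4` for `t ≥ t*` is `C¹` in time on `[0,∞)` with `u(t*) = 1` and
`∂ₜu(t*) = √2`, but is not twice differentiable at `t*`: the one-sided limits of `∂ₜ²u`
at `t*` are `-2` (from the left) and `0` (from the right).  In particular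
`u ∈ C¹([0,∞) × [0,L])` but `u ∉ C²([0,∞) × [0,L])`. -/
theorem loss_of_smoothness
    (L : ℝ) (hL : 0 < L)
    (u : ℝ → ℝ → ℝ)
    (hu : ∀ t x, u t x =
      if t ≤ π / (4 * Real.sqrt 2) then Real.sqrt 2 * Real.sin (Real.sqrt 2 * t)
      else Real.sqrt 2 * t + 1 - π / 4) :
    (∀ x ∈ Icc 0 L,
      -- t ↦ u(t,x) is continuously differentiable on [0,∞)
      (∀ t ∈ Ici (0:ℝ), HasDerivAt (fun τ => u τ x) (deriv (fun τ => u τ x) t) t) ∧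
      ContinuousOn (deriv (fun τ => u τ x)) (Ici 0) ∧
      -- value and derivative at the transition time t* = π/(4√2)
      u (π / (4 * Real.sqrt 2)) x = 1 ∧
      deriv (fun τ => u τ x) (π / (4 * Real.sqrt 2)) = Real.sqrt 2 ∧
      -- t ↦ u(t,x) is not twice differentiable at t*
      ¬ DifferentiableAt ℝ (deriv (fun τ => u τ x)) (π / (4 * Real.sqrt 2)) ∧
      -- one-sided limits of the second time derivative at t*
      Tendsto (deriv (deriv (fun τ => u τ x)))
        (nhdsWithin (π / (4 * Real.sqrt 2)) (Iio (π / (4 * Real.sqrt 2)))) (nhds (-2)) ∧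
      Tendsto (deriv (deriv (fun τ => u τ x)))
        (nhdsWithin (π / (4 * Real.sqrt 2)) (Ioi (π / (4 * Real.sqrt 2)))) (nhds 0)) ∧
    -- u is C¹ but not C² on [0,∞) × [0,L]
    ContDiffOn ℝ 1 (fun p : ℝ × ℝ => u p.1 p.2) (Ici 0 ×ˢ Icc 0 L) ∧
    ¬ ContDiffOn ℝ 2 (fun p : ℝ × ℝ => u p.1 p.2) (Ici 0 ×ˢ Icc 0 L) := by
  have hslice : ∀ x, (fun τ => u τ x) = beamProfile := fun x => funext fun t => hu t x
  have hgraph : (fun p : ℝ × ℝ => u p.1 p.2) = fun p => beamProfile p.1 :=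
    funext fun p => hu p.1 p.2
  refine ⟨fun x _ => ?_, ?_, fun h => ?_⟩
  · rw [hslice x, deriv_beamProfile]
    exact ⟨fun t _ => hasDerivAt_beamProfile t, continuous_beamVelocity.continuousOn,
      (hu _ x).trans beamProfile_detachTime, beamVelocity_detachTime,
      not_differentiableAt_beamVelocity, tendsto_deriv_beamVelocity_left,
      tendsto_deriv_beamVelocity_right⟩
  · rw [hgraph]
    exact (contDiff_one_beamProfile.comp contDiff_fst).contDiffOn
  · rw [hgraph] at h
    exact not_contDiffAt_two_beamProfile <| h.contDiffAt_of_comp_fst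
      (Ici_mem_nhds detachTime_pos) (Icc_mem_nhds (half_pos hL) (half_lt_self hL))
end

section
/- The piecewise attached–detached function is a solution with constant energy: Let L > 0, ρ = μ = 1, let Φ₀ be the prototype adhesive potential, set t* = π/(4√2), and define u : [0,∞)×[0,L] → ℝ by u(t,x) = √2·sin(√2·t) for 0 ≤ t ≤ t* and u(t,x) = √2·t + 1 − π/4 for t ≥ t*. Then: (i) u(0,x) = 0 and ∂_t u(0,x) = 2 for every x; (ii) for every t ∈ (0,∞) with t ≠ t* and every x ∈ (0,L), |u(t,x)| ≠ 1 and ∂²_t u(t,x) = −∂⁴ₓu(t,x) − Φ₀'(u(t,x)) (for t < t* one has 0 ≤ u(t,x) < 1 and Φ₀'(u) = 2u, for t > t* one has u(t,x) > 1 and Φ₀'(u) = 0); (iii) u trivially satisfies the free-end boundary conditions ∂²ₓu = ∂³ₓu = 0 at x = 0, L; and (iv) the energy ∫₀^L (((∂_t u(t,x))² + (∂²ₓu(t,x))²)/2 + Φ₀(u(t,x))) dx equals 2L for every t ≥ 0, including across the transition time t*. -/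
/-!
The function does not depend on `x`, so all its spatial derivatives vanish: the boundary
conditions are trivial and the beam equation reduces to the ODE `ü = -Φ₀'(u)`.
Up to `t* = π/(4√2)` the function `√2 sin(√2 t)` solves the oscillator `ü = -2u` and stays in
`[0, 1]`; at `t*` it reaches `u = 1` with velocity `u̇ = 2 cos(π/4) = √2`, which is the slope of the
affine continuation, so the glued function is `C¹`; after `t*` it moves freely (`ü = 0`) with
`u > 1`. The energy density `u̇²/2 + Φ₀(u)` is `2cos² + 2sin² = 2` before `t*` and `1 + 1 = 2`
after it, hence the energy is `2L`.
-/

open MeasureTheory Filter Set intervalIntegral Real Topology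

/-- The prototype adhesive potential `Φ₀(s) = s²` for `|s| ≤ 1`, `Φ₀(s) = 1` for `|s| > 1`. -/
noncomputable def Phi0 (s : ℝ) : ℝ := if |s| ≤ 1 then s ^ 2 else 1

section Gluing

variable {α : Type*} {f₁ f₂ : ℝ → α} {a t : ℝ}

theorem ite_le_eventuallyEq_left (h : t < a) :
    (fun s => if s ≤ a then f₁ s else f₂ s) =ᶠ[𝓝 t] f₁ :=
  eventually_of_mem (Iio_mem_nhds h) fun _ hs => if_pos (le_of_lt hs)

theorem ite_le_eventuallyEq_right (h : a < t) :
    (fun s => if s ≤ a then f₁ s else f₂ s) =ᶠ[𝓝 t] f₂ :=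
  eventually_of_mem (Ioi_mem_nhds h) fun _ hs => if_neg (not_le.mpr hs)

variable {E : Type*} [NormedAddCommGroup E] [NormedSpace ℝ E] {f₁ f₂ f₁' f₂' : ℝ → E}

theorem hasDerivAt_ite_le_s16 (h₁ : ∀ t, HasDerivAt f₁ (f₁' t) t) (h₂ : ∀ t, HasDerivAt f₂ (f₂' t) t)
    (hf : f₁ a = f₂ a) (hf' : f₁' a = f₂' a) (t : ℝ) :
    HasDerivAt (fun s => if s ≤ a then f₁ s else f₂ s) (if t ≤ a then f₁' t else f₂' t) t := by
  rcases lt_trichotomy t a with h | rfl | h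
  · rw [if_pos h.le]
    exact (h₁ t).congr_of_eventuallyEq (ite_le_eventuallyEq_left h)
  · have left : HasDerivWithinAt (fun s => if s ≤ t then f₁ s else f₂ s) (f₁' t) (Iic t) t :=
      (h₁ t).hasDerivWithinAt.congr (fun _ hs => if_pos hs) (if_pos le_rfl)
    have right : HasDerivWithinAt (fun s => if s ≤ t then f₁ s else f₂ s) (f₁' t) (Ici t) t := by
      rw [hf']
      refine (h₂ t).hasDerivWithinAt.congr (fun s hs => ?_) (by simp [hf])
      rcases (mem_Ici.mp hs).eq_or_lt with rfl | hs
      · simp [hf]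
      · exact if_neg (not_le.mpr hs)
    rw [if_pos le_rfl, ← hasDerivWithinAt_univ, ← Iic_union_Ici]
    exact left.union right
  · rw [if_neg (not_le.mpr h)]
    exact (h₂ t).congr_of_eventuallyEq (ite_le_eventuallyEq_right h)

end Gluing

namespace AdhesiveBeam

noncomputable def transitionTime : ℝ := π / (4 * √2)

noncomputable def profile (t : ℝ) : ℝ :=
  if t ≤ transitionTime then √2 * sin (√2 * t) else √2 * t + 1 - π / 4

noncomputable def velocity (t : ℝ) : ℝ :=
  if t ≤ transitionTime then 2 * cos (√2 * t) else √2

variable {t : ℝ}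

theorem profile_of_le (h : t ≤ transitionTime) : profile t = √2 * sin (√2 * t) := if_pos h

theorem profile_of_gt (h : transitionTime < t) : profile t = √2 * t + 1 - π / 4 :=
  if_neg h.not_ge

theorem velocity_of_le (h : t ≤ transitionTime) : velocity t = 2 * cos (√2 * t) := if_pos h

theorem velocity_of_gt (h : transitionTime < t) : velocity t = √2 := if_neg h.not_ge

theorem sqrt_two_mul_transitionTime : √2 * transitionTime = π / 4 := by
  rw [transitionTime]
  field_simp

theorem transitionTime_pos : 0 < transitionTime := by
  unfold transitionTime; positivity

theorem hasDerivAt_attached_profile (t : ℝ) :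
    HasDerivAt (fun τ => √2 * sin (√2 * τ)) (2 * cos (√2 * t)) t := by
  refine (((hasDerivAt_id' t).const_mul √2).sin.const_mul √2).congr_deriv ?_
  linear_combination cos (√2 * t) * Real.mul_self_sqrt zero_le_two

theorem hasDerivAt_attached_velocity (t : ℝ) :
    HasDerivAt (fun τ => 2 * cos (√2 * τ)) (-2 * (√2 * sin (√2 * t))) t := by
  refine (((hasDerivAt_id' t).const_mul √2).cos.const_mul 2).congr_deriv ?_
  ring

theorem hasDerivAt_detached_profile (t : ℝ) : HasDerivAt (fun τ => √2 * τ + 1 - π / 4) √2 t := by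
  simpa using (((hasDerivAt_id t).const_mul √2).add_const 1).sub_const (π / 4)

theorem hasDerivAt_profile (t : ℝ) : HasDerivAt profile (velocity t) t := by
  refine hasDerivAt_ite_le_s16 hasDerivAt_attached_profile hasDerivAt_detached_profile ?_ ?_ t
  · rw [sqrt_two_mul_transitionTime, sin_pi_div_four]
    linear_combination (Real.mul_self_sqrt zero_le_two) / 2
  · rw [sqrt_two_mul_transitionTime, cos_pi_div_four]; ring

theorem profile_zero : profile 0 = 0 := by
  simp [profile_of_le transitionTime_pos.le]

theorem velocity_zero : velocity 0 = 2 := by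
  simp [velocity_of_le transitionTime_pos.le]

theorem deriv_profile : deriv profile = velocity := funext fun t => (hasDerivAt_profile t).deriv

theorem deriv_velocity_of_lt (h : t < transitionTime) :
    deriv velocity t = -2 * profile t := by
  have : velocity =ᶠ[𝓝 t] fun τ => 2 * cos (√2 * τ) := ite_le_eventuallyEq_left h
  rw [this.deriv_eq, (hasDerivAt_attached_velocity t).deriv, profile_of_le h.le]

theorem deriv_velocity_of_gt (h : transitionTime < t) : deriv velocity t = 0 := by
  have : velocity =ᶠ[𝓝 t] fun _ => √2 := ite_le_eventuallyEq_right h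
  rw [this.deriv_eq, deriv_const]

theorem sqrt_two_mul_sin_le_one {θ : ℝ} (h₀ : -(π / 2) ≤ θ) (h : θ ≤ π / 4) : √2 * sin θ ≤ 1 := by
  have := sin_le_sin_of_le_of_le_pi_div_two h₀ (by linarith [pi_pos]) h
  rw [sin_pi_div_four] at this
  nlinarith [Real.mul_self_sqrt zero_le_two, sqrt_nonneg 2]

theorem sqrt_two_mul_sin_lt_one {θ : ℝ} (h₀ : -(π / 2) ≤ θ) (h : θ < π / 4) : √2 * sin θ < 1 := by
  have := sin_lt_sin_of_lt_of_le_pi_div_two h₀ (by linarith [pi_pos]) h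
  rw [sin_pi_div_four] at this
  nlinarith [Real.mul_self_sqrt zero_le_two, sqrt_pos.mpr zero_lt_two]

theorem sqrt_two_mul_le_pi_div_four (h : t ≤ transitionTime) : √2 * t ≤ π / 4 := by
  rw [← sqrt_two_mul_transitionTime]; gcongr

theorem sqrt_two_mul_lt_pi_div_four (h : t < transitionTime) : √2 * t < π / 4 := by
  rw [← sqrt_two_mul_transitionTime]; gcongr

theorem neg_pi_div_two_le_sqrt_two_mul (h₀ : 0 ≤ t) : -(π / 2) ≤ √2 * t := by
  linarith [pi_pos, mul_nonneg (sqrt_nonneg 2) h₀]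

theorem profile_nonneg (h₀ : 0 ≤ t) (h : t ≤ transitionTime) : 0 ≤ profile t := by
  rw [profile_of_le h]
  refine mul_nonneg (sqrt_nonneg 2) (sin_nonneg_of_nonneg_of_le_pi (by positivity) ?_)
  linarith [pi_pos, sqrt_two_mul_le_pi_div_four h]

theorem abs_profile_le_one (h₀ : 0 ≤ t) (h : t ≤ transitionTime) : |profile t| ≤ 1 := by
  refine abs_le.mpr ⟨by linarith [profile_nonneg h₀ h], ?_⟩
  rw [profile_of_le h]
  exact sqrt_two_mul_sin_le_one (neg_pi_div_two_le_sqrt_two_mul h₀) (sqrt_two_mul_le_pi_div_four h)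

theorem abs_profile_lt_one (h₀ : 0 ≤ t) (h : t < transitionTime) : |profile t| < 1 := by
  refine abs_lt.mpr ⟨by linarith [profile_nonneg h₀ h.le], ?_⟩
  rw [profile_of_le h.le]
  exact sqrt_two_mul_sin_lt_one (neg_pi_div_two_le_sqrt_two_mul h₀) (sqrt_two_mul_lt_pi_div_four h)

theorem one_lt_profile (h : transitionTime < t) : 1 < profile t := by
  have : π / 4 < √2 * t := by rw [← sqrt_two_mul_transitionTime]; gcongr
  rw [profile_of_gt h]
  linarith

theorem one_lt_abs_profile (h : transitionTime < t) : 1 < |profile t| :=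
  (one_lt_profile h).trans_le (le_abs_self _)

theorem abs_profile_ne_one (h₀ : 0 ≤ t) (h : t ≠ transitionTime) : |profile t| ≠ 1 := by
  rcases h.lt_or_gt with h | h
  · exact (abs_profile_lt_one h₀ h).ne
  · exact (one_lt_abs_profile h).ne'

theorem deriv_velocity_eq_neg_Phi0' (h₀ : 0 ≤ t) (h : t ≠ transitionTime) :
    deriv velocity t = -Phi0' (profile t) := by
  rcases h.lt_or_gt with h | h
  · rw [deriv_velocity_of_lt h, Phi0', if_pos (abs_profile_lt_one h₀ h)]
    ring
  · rw [deriv_velocity_of_gt h, Phi0', if_neg (one_lt_abs_profile h).not_gt, neg_zero]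

theorem velocity_sq_div_two_add_Phi0_profile (h₀ : 0 ≤ t) :
    velocity t ^ 2 / 2 + Phi0 (profile t) = 2 := by
  rcases le_or_gt t transitionTime with h | h
  · rw [Phi0, if_pos (abs_profile_le_one h₀ h), velocity_of_le h, profile_of_le h]
    nlinarith [sin_sq_add_cos_sq (√2 * t), Real.sq_sqrt zero_le_two]
  · rw [Phi0, if_neg (one_lt_abs_profile h).not_ge, velocity_of_gt h, Real.sq_sqrt zero_le_two]
    norm_num

end AdhesiveBeam

open AdhesiveBeam in
theorem piecewise_solution_constant_energy_general
    (L : ℝ)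
    (u : ℝ → ℝ → ℝ)
    (hu : ∀ t x, u t x =
      if t ≤ π / (4 * Real.sqrt 2) then Real.sqrt 2 * Real.sin (Real.sqrt 2 * t)
      else Real.sqrt 2 * t + 1 - π / 4) :
    -- (i) initial conditions
    (∀ x ∈ Icc 0 L, u 0 x = 0 ∧ deriv (fun τ => u τ x) 0 = 2) ∧
    -- (ii) the PDE holds for every t > 0 with t ≠ t*, and |u| ≠ 1 there
    (∀ t ∈ Ioi (0:ℝ), t ≠ π / (4 * Real.sqrt 2) → ∀ x ∈ Ioo 0 L,
      |u t x| ≠ 1 ∧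
      deriv (deriv (fun τ => u τ x)) t
        = -(iteratedDeriv 4 (fun y => u t y) x) - Phi0' (u t x)) ∧
    -- (iii) free-end boundary conditions
    (∀ t ∈ Ici (0:ℝ),
      iteratedDeriv 2 (fun y => u t y) 0 = 0 ∧ iteratedDeriv 2 (fun y => u t y) L = 0 ∧
      iteratedDeriv 3 (fun y => u t y) 0 = 0 ∧ iteratedDeriv 3 (fun y => u t y) L = 0) ∧
    -- (iv) the energy is constant, equal to 2L
    (∀ t ∈ Ici (0:ℝ),
      (∫ x in (0:ℝ)..L,
          (((deriv (fun τ => u τ x) t) ^ 2 + (iteratedDeriv 2 (fun y => u t y) x) ^ 2) / 2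
            + Phi0 (u t x)))
        = 2 * L) := by
  obtain rfl : u = fun t _ => profile t := funext₂ hu
  simp only [deriv_profile, iteratedDeriv_const]
  refine ⟨fun _ _ => ⟨profile_zero, velocity_zero⟩,
    fun t ht hne _ _ => ⟨abs_profile_ne_one ht.le hne, ?_⟩, fun _ _ => by norm_num,
    fun t ht => ?_⟩
  · simpa using deriv_velocity_eq_neg_Phi0' ht.le hne
  · simp [velocity_sq_div_two_add_Phi0_profile ht, mul_comm]

/-- **The piecewise attached–detached function is a solution with constant energy.**
With `ρ = μ = 1`, `t* = π/(4√2)` and `u(t,x) = √2 sin(√2 t)` for `t ≤ t*`,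
`u(t,x) = √2 t + 1 - π/4` for `t ≥ t*`: `u` has initial data `(0, 2)`, solves the adhesive
beam equation `∂ₜ²u = -∂ₓ⁴u - Φ₀'(u)` away from the transition time `t*` (never touching
`|u| = 1` there), satisfies the free-end boundary conditions, and its energy is constant
equal to `2L`, including across the transition time. -/
theorem piecewise_solution_constant_energy
    (L : ℝ) (hL : 0 < L)
    (u : ℝ → ℝ → ℝ)
    (hu : ∀ t x, u t x =
      if t ≤ π / (4 * Real.sqrt 2) then Real.sqrt 2 * Real.sin (Real.sqrt 2 * t)
      else Real.sqrt 2 * t + 1 - π / 4) :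
    -- (i) initial conditions
    (∀ x ∈ Icc 0 L, u 0 x = 0 ∧ deriv (fun τ => u τ x) 0 = 2) ∧
    -- (ii) the PDE holds for every t > 0 with t ≠ t*, and |u| ≠ 1 there
    (∀ t ∈ Ioi (0:ℝ), t ≠ π / (4 * Real.sqrt 2) → ∀ x ∈ Ioo 0 L,
      |u t x| ≠ 1 ∧
      deriv (deriv (fun τ => u τ x)) t
        = -(iteratedDeriv 4 (fun y => u t y) x) - Phi0' (u t x)) ∧
    -- (iii) free-end boundary conditions
    (∀ t ∈ Ici (0:ℝ),
      iteratedDeriv 2 (fun y => u t y) 0 = 0 ∧ iteratedDeriv 2 (fun y => u t y) L = 0 ∧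
      iteratedDeriv 3 (fun y => u t y) 0 = 0 ∧ iteratedDeriv 3 (fun y => u t y) L = 0) ∧
    -- (iv) the energy is constant, equal to 2L
    (∀ t ∈ Ici (0:ℝ),
      (∫ x in (0:ℝ)..L,
          (((deriv (fun τ => u τ x) t) ^ 2 + (iteratedDeriv 2 (fun y => u t y) x) ^ 2) / 2
            + Phi0 (u t x)))
        = 2 * L) :=
  piecewise_solution_constant_energy_general L u hu
end
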